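/- Let M be a module over R[S₃]. Let M₃ denote the image of the R-linear map m ↦ e₃·m, and let M₃₁, M₃₂ denote the images of the R-linear maps m ↦ e₃₁·m and m ↦ e₃₂·m respectively. Then M₃₁ and M₃₂ are R-submodules of M₃, and M₃ is the internal direct sum M₃ = M₃₁ ⊕ M₃₂ of R-modules. -/

import Mathlib

/-!
`e₃₁` and `e₃₂` are orthogonal idempotents of `R[S₃]` whose sum is `e₃`. Up to the scalar
`1/3`, each of the four products `e₃₁ e₃₁`, `e₃₂ e₃₂`, `e₃₁ e₃₂`, `e₃₂ e₃₁` is a consequence of the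
relations `s³ = t² = 1`, `t s = s² t` alone, so it holds for any such pair `s, t` in any ring.
If `b`, `c` are orthogonal idempotents, multiplication by `b + c` fixes the images of `b` and
`c`, and these meet only in `0` because `x = b x = b c y = 0`; hence
`image (b + c) = image b ⊕ image c`.
-/

noncomputable section

/-- A fixed 3-cycle in `S₃ = Equiv.Perm (Fin 3)` (it sends `0 ↦ 1 ↦ 2 ↦ 0`). -/
def σ : Equiv.Perm (Fin 3) := finRotate 3

/-- A fixed transposition in `S₃ = Equiv.Perm (Fin 3)`; it satisfies `τ * σ * τ⁻¹ = σ ^ 2`. -/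
def τ : Equiv.Perm (Fin 3) := Equiv.swap 0 1

/-- The image of a group element in the group ring `R[S₃]`. -/
def G (R : Type*) [CommRing R] (g : Equiv.Perm (Fin 3)) :
    MonoidAlgebra R (Equiv.Perm (Fin 3)) :=
  MonoidAlgebra.of R (Equiv.Perm (Fin 3)) g

/-- `e₁ = (1/6)(e + σ + σ² + τ + στ + σ²τ)` in `R[S₃]`. -/
def e₁ (R : Type*) [CommRing R] [Invertible (6 : R)] :
    MonoidAlgebra R (Equiv.Perm (Fin 3)) :=
  ⅟(6:R) • (1 + G R σ + G R (σ^2) + G R τ + G R (σ*τ) + G R (σ^2*τ))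

/-- `e₂ = (1/6)(e + σ + σ² - τ - στ - σ²τ)` in `R[S₃]`. -/
def e₂ (R : Type*) [CommRing R] [Invertible (6 : R)] :
    MonoidAlgebra R (Equiv.Perm (Fin 3)) :=
  ⅟(6:R) • (1 + G R σ + G R (σ^2) - G R τ - G R (σ*τ) - G R (σ^2*τ))

/-- `e₃ = (1/3)(2e - σ - σ²)` in `R[S₃]`; here `1/3 = 2 * (1/6)`. -/
def e₃ (R : Type*) [CommRing R] [Invertible (6 : R)] :
    MonoidAlgebra R (Equiv.Perm (Fin 3)) :=
  (2 * ⅟(6:R)) • (2 - G R σ - G R (σ^2))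

/-- `e₃₁ = (1/3)(e - σ + στ - σ²τ)` in `R[S₃]`. -/
def e₃₁ (R : Type*) [CommRing R] [Invertible (6 : R)] :
    MonoidAlgebra R (Equiv.Perm (Fin 3)) :=
  (2 * ⅟(6:R)) • (1 - G R σ + G R (σ*τ) - G R (σ^2*τ))

/-- `e₃₂ = (1/3)(e - σ² - στ + σ²τ)` in `R[S₃]`. -/
def e₃₂ (R : Type*) [CommRing R] [Invertible (6 : R)] :
    MonoidAlgebra R (Equiv.Perm (Fin 3)) :=
  (2 * ⅟(6:R)) • (1 - G R (σ^2) - G R (σ*τ) + G R (σ^2*τ))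

/-- The image of the `R`-linear map `m ↦ a • m` on an `R[S₃]`-module `M`,
as an `R`-submodule of `M`. -/
def eRange (R : Type*) [CommRing R] (M : Type*) [AddCommGroup M] [Module R M]
    [Module (MonoidAlgebra R (Equiv.Perm (Fin 3))) M]
    [IsScalarTower R (MonoidAlgebra R (Equiv.Perm (Fin 3))) M]
    (a : MonoidAlgebra R (Equiv.Perm (Fin 3))) : Submodule R M where
  carrier := Set.range fun m : M => a • m
  zero_mem' := ⟨0, smul_zero a⟩
  add_mem' := by
    rintro _ _ ⟨x, rfl⟩ ⟨y, rfl⟩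
    exact ⟨x + y, smul_add a x y⟩
  smul_mem' := by
    rintro r _ ⟨x, rfl⟩
    exact ⟨r • x, smul_comm a r x⟩

structure IsS3Pair {A : Type*} [Ring A] (s t : A) : Prop where
  s_mul_s_mul_s : s * (s * s) = 1
  t_mul_t : t * t = 1
  t_mul_s : t * s = s * (s * t)

namespace IsS3Pair

variable {A : Type*} [Ring A] {s t : A}

theorem s_mul_s_mul_s_mul (h : IsS3Pair s t) (x : A) : s * (s * (s * x)) = x := by
  rw [← mul_assoc, ← mul_assoc, mul_assoc s s s, h.s_mul_s_mul_s, one_mul]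

theorem t_mul_s_mul (h : IsS3Pair s t) (x : A) : t * (s * x) = s * (s * (t * x)) := by
  rw [← mul_assoc, h.t_mul_s, mul_assoc, mul_assoc]

/- In the four identities below, `simp` rewrites every word in `s`, `t` to its normal form
`sⁱtʲ` (`i < 3`, `j < 2`), after which they are identities of abelian groups. -/

theorem fst_mul_fst (h : IsS3Pair s t) :
    (1 - s + s * t - s * s * t) * (1 - s + s * t - s * s * t) =
      3 • (1 - s + s * t - s * s * t) := by
  simp only [mul_sub, sub_mul, mul_add, add_mul, mul_one, one_mul, mul_assoc,
    h.s_mul_s_mul_s, h.t_mul_t, h.t_mul_s, h.s_mul_s_mul_s_mul, h.t_mul_s_mul]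
  abel

theorem snd_mul_snd (h : IsS3Pair s t) :
    (1 - s * s - s * t + s * s * t) * (1 - s * s - s * t + s * s * t) =
      3 • (1 - s * s - s * t + s * s * t) := by
  simp only [mul_sub, sub_mul, mul_add, add_mul, mul_one, one_mul, mul_assoc,
    h.s_mul_s_mul_s, h.t_mul_t, h.t_mul_s, h.s_mul_s_mul_s_mul, h.t_mul_s_mul]
  abel

theorem fst_mul_snd (h : IsS3Pair s t) :
    (1 - s + s * t - s * s * t) * (1 - s * s - s * t + s * s * t) = 0 := by
  simp only [mul_sub, sub_mul, mul_add, add_mul, mul_one, one_mul, mul_assoc,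
    h.s_mul_s_mul_s, h.t_mul_t, h.t_mul_s, h.s_mul_s_mul_s_mul, h.t_mul_s_mul]
  abel

theorem snd_mul_fst (h : IsS3Pair s t) :
    (1 - s * s - s * t + s * s * t) * (1 - s + s * t - s * s * t) = 0 := by
  simp only [mul_sub, sub_mul, mul_add, add_mul, mul_one, one_mul, mul_assoc,
    h.s_mul_s_mul_s, h.t_mul_t, h.t_mul_s, h.s_mul_s_mul_s_mul, h.t_mul_s_mul]
  abel

end IsS3Pair

theorem isIdempotentElem_smul_of_mul_self_eq_nsmul {R A : Type*} [CommSemiring R] [Semiring A]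
    [Algebra R A] {c : R} {a : A} {n : ℕ} (hc : c * n = 1) (ha : a * a = n • a) :
    IsIdempotentElem (c • a) := by
  rw [IsIdempotentElem, smul_mul_smul_comm, ha, ← Nat.cast_smul_eq_nsmul R, smul_smul,
    mul_assoc, hc, mul_one]

section GroupRing

variable (R : Type*) [CommRing R]

theorem G_one : G R 1 = 1 := map_one _

theorem G_mul (g h : Equiv.Perm (Fin 3)) : G R (g * h) = G R g * G R h := map_mul _ g h

theorem G_sq (g : Equiv.Perm (Fin 3)) : G R (g ^ 2) = G R g * G R g := by rw [sq, G_mul]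

theorem isS3Pair_G : IsS3Pair (G R σ) (G R τ) where
  s_mul_s_mul_s := by rw [← G_mul, ← G_mul, ← G_one, show σ * (σ * σ) = 1 by decide]
  t_mul_t := by rw [← G_mul, ← G_one, show τ * τ = 1 by decide]
  t_mul_s := by rw [← G_mul, ← G_mul, ← G_mul, show τ * σ = σ * (σ * τ) by decide]

variable [Invertible (6 : R)]

theorem two_mul_invOf_six_mul_three : 2 * ⅟(6 : R) * (3 : ℕ) = 1 := by
  rw [Nat.cast_ofNat, mul_right_comm, ← invOf_mul_self (6 : R)]
  norm_num

theorem e₃₁_eq_smul :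
    e₃₁ R = (2 * ⅟(6 : R)) • (1 - G R σ + G R σ * G R τ - G R σ * G R σ * G R τ) := by
  simp only [e₃₁, G_mul, G_sq]

theorem e₃₂_eq_smul :
    e₃₂ R = (2 * ⅟(6 : R)) • (1 - G R σ * G R σ - G R σ * G R τ + G R σ * G R σ * G R τ) := by
  simp only [e₃₂, G_mul, G_sq]

theorem isIdempotentElem_e₃₁ : IsIdempotentElem (e₃₁ R) := by
  rw [e₃₁_eq_smul]
  exact isIdempotentElem_smul_of_mul_self_eq_nsmul (two_mul_invOf_six_mul_three R)
    (isS3Pair_G R).fst_mul_fst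

theorem isIdempotentElem_e₃₂ : IsIdempotentElem (e₃₂ R) := by
  rw [e₃₂_eq_smul]
  exact isIdempotentElem_smul_of_mul_self_eq_nsmul (two_mul_invOf_six_mul_three R)
    (isS3Pair_G R).snd_mul_snd

theorem e₃₁_mul_e₃₂ : e₃₁ R * e₃₂ R = 0 := by
  rw [e₃₁_eq_smul, e₃₂_eq_smul, smul_mul_smul_comm, (isS3Pair_G R).fst_mul_snd, smul_zero]

theorem e₃₂_mul_e₃₁ : e₃₂ R * e₃₁ R = 0 := by
  rw [e₃₁_eq_smul, e₃₂_eq_smul, smul_mul_smul_comm, (isS3Pair_G R).snd_mul_fst, smul_zero]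

theorem e₃₁_add_e₃₂ : e₃₁ R + e₃₂ R = e₃ R := by
  rw [e₃₁, e₃₂, e₃, ← smul_add, ← one_add_one_eq_two (R := MonoidAlgebra _ _)]
  abel_nf

end GroupRing

section IdempotentImages

variable {R : Type*} [CommRing R] {M : Type*} [AddCommGroup M] [Module R M]
  [Module (MonoidAlgebra R (Equiv.Perm (Fin 3))) M]
  [IsScalarTower R (MonoidAlgebra R (Equiv.Perm (Fin 3))) M]
  {a b : MonoidAlgebra R (Equiv.Perm (Fin 3))}

theorem mem_eRange {x : M} : x ∈ eRange R M a ↔ ∃ m, a • m = x := Iff.rfl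

theorem smul_mem_eRange (m : M) : a • m ∈ eRange R M a := ⟨m, rfl⟩

theorem eRange_le_iff {P : Submodule R M} : eRange R M a ≤ P ↔ ∀ m, a • m ∈ P :=
  Set.range_subset_iff

theorem eRange_le_of_mul_eq (h : a * b = b) : eRange R M b ≤ eRange R M a :=
  eRange_le_iff.2 fun m ↦ mem_eRange.2 ⟨b • m, by rw [← mul_smul, h]⟩

theorem eRange_add_le : eRange R M (a + b) ≤ eRange R M a ⊔ eRange R M b :=
  eRange_le_iff.2 fun m ↦ by
    rw [add_smul]
    exact Submodule.add_mem_sup (smul_mem_eRange m) (smul_mem_eRange m)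

theorem disjoint_eRange (ha : IsIdempotentElem a) (hab : a * b = 0) :
    Disjoint (eRange R M a) (eRange R M b) := by
  rw [Submodule.disjoint_def]
  intro x hxa hxb
  obtain ⟨m, rfl⟩ := mem_eRange.1 hxa
  obtain ⟨n, hn⟩ := mem_eRange.1 hxb
  calc a • m = a • a • m := by rw [← mul_smul, ha.eq]
    _ = 0 := by rw [← hn, ← mul_smul, hab, zero_smul]

theorem eRange_add_of_orthogonal (ha : IsIdempotentElem a) (hb : IsIdempotentElem b)
    (hab : a * b = 0) (hba : b * a = 0) :
    eRange R M a ≤ eRange R M (a + b) ∧ eRange R M b ≤ eRange R M (a + b) ∧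
      Disjoint (eRange R M a) (eRange R M b) ∧
      eRange R M a ⊔ eRange R M b = eRange R M (a + b) := by
  have hleft : eRange R M a ≤ eRange R M (a + b) :=
    eRange_le_of_mul_eq (by rw [add_mul, ha.eq, hba, add_zero])
  have hright : eRange R M b ≤ eRange R M (a + b) :=
    eRange_le_of_mul_eq (by rw [add_mul, hb.eq, hab, zero_add])
  exact ⟨hleft, hright, disjoint_eRange ha hab, le_antisymm (sup_le hleft hright) eRange_add_le⟩

end IdempotentImages

theorem statement14_general (R : Type*) [CommRing R] [Invertible (6 : R)]
    (M : Type*) [AddCommGroup M] [Module R M]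
    [Module (MonoidAlgebra R (Equiv.Perm (Fin 3))) M]
    [IsScalarTower R (MonoidAlgebra R (Equiv.Perm (Fin 3))) M] :
    eRange R M (e₃₁ R) ≤ eRange R M (e₃ R) ∧
    eRange R M (e₃₂ R) ≤ eRange R M (e₃ R) ∧
    Disjoint (eRange R M (e₃₁ R)) (eRange R M (e₃₂ R)) ∧
    eRange R M (e₃₁ R) ⊔ eRange R M (e₃₂ R) = eRange R M (e₃ R) := by
  rw [← e₃₁_add_e₃₂]
  exact eRange_add_of_orthogonal (isIdempotentElem_e₃₁ R) (isIdempotentElem_e₃₂ R)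
    (e₃₁_mul_e₃₂ R) (e₃₂_mul_e₃₁ R)

/-- Let `M` be a module over `R[S₃]`; let `M₃`, `M₃₁`, `M₃₂` be the
images of the `R`-linear maps `m ↦ e₃·m`, `m ↦ e₃₁·m`, `m ↦ e₃₂·m` respectively.
Then `M₃₁` and `M₃₂` are `R`-submodules of `M₃`, and `M₃` is their internal direct sum:
`M₃₁ ⊓ M₃₂ = 0` and `M₃₁ ⊔ M₃₂ = M₃`. -/
theorem statement14 (R : Type*) [CommRing R] [IsDomain R] [Invertible (6 : R)]
    (M : Type*) [AddCommGroup M] [Module R M]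
    [Module (MonoidAlgebra R (Equiv.Perm (Fin 3))) M]
    [IsScalarTower R (MonoidAlgebra R (Equiv.Perm (Fin 3))) M] :
    eRange R M (e₃₁ R) ≤ eRange R M (e₃ R) ∧
    eRange R M (e₃₂ R) ≤ eRange R M (e₃ R) ∧
    Disjoint (eRange R M (e₃₁ R)) (eRange R M (e₃₂ R)) ∧
    eRange R M (e₃₁ R) ⊔ eRange R M (e₃₂ R) = eRange R M (e₃ R) :=
  statement14_general R M
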